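/- arXiv:2506.05738 — 3 statements merged into one kernel-verified Lean document; each statement's English description precedes it below -/
import Mathlib

section
/- Let n = 2m, d = s(2^m − 1) with gcd(s, 2^m + 1) = t, (2^m + 1)/t > 3, and 3t | 2^m + 1. Then the system x^d + y^d = 1 and (x+1)^d + (y+1)^d = 1 has exactly 4t^4 − 4t^3 + 2t^2 + 2 solutions (x,y) in F_{2^n}^2. -/
open Finset Polynomial

set_option linter.unusedSectionVars false
set_option linter.unusedVariables false

variable {F : Type} [Field F] [Fintype F] [DecidableEq F]

lemma roots_count (k : ℕ) (hk0 : 0 < k) (hk : k ∣ Fintype.card F - 1) :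
    (univ.filter fun v : F => v ^ k = 1).card = k := by
  obtain ⟨g, hg⟩ := IsCyclic.exists_generator (α := Fˣ)
  have hord : orderOf g = Fintype.card F - 1 := by
    rw [orderOf_eq_card_of_forall_mem_zpowers hg, Nat.card_eq_fintype_card, Fintype.card_units]
  obtain ⟨c, hc⟩ := hk
  have hcard1 : 0 < Fintype.card F - 1 := by
    have := Fintype.one_lt_card (α := F)
    omega
  have hprim : IsPrimitiveRoot ((g : Fˣ) : F) (Fintype.card F - 1) := by
    rw [← hord]
    exact IsPrimitiveRoot.coe_units_iff.mpr (IsPrimitiveRoot.orderOf g)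
  have hprimk : IsPrimitiveRoot (((g : Fˣ) : F) ^ c) k :=
    hprim.pow hcard1 (by rw [hc, mul_comm])
  have hset : univ.filter (fun v : F => v ^ k = 1) = nthRootsFinset k (1 : F) := by
    ext x
    simp [Polynomial.mem_nthRootsFinset hk0]
  rw [hset, hprimk.card_nthRootsFinset]

lemma pow_d_facts (q s d : ℕ) (hq2 : 2 ≤ q) (hcard : Fintype.card F = q ^ 2)
    (hd : d = s * (q - 1)) (z : F) (hz : z ≠ 0) :
    (z ^ (q-1)) ^ (q+1) = 1 ∧ (z ^ (q-1)) ^ s = z ^ d ∧ z ^ (q-1) * z = z ^ q := by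
  have harith : (q - 1) * (q + 1) = q ^ 2 - 1 := by
    rw [mul_comm, ← Nat.sq_sub_sq q 1, one_pow]
  have hz1 : z ^ (q ^ 2 - 1) = 1 := by
    rw [← hcard]; exact FiniteField.pow_card_sub_one_eq_one z hz
  refine ⟨?_, ?_, ?_⟩
  · rw [← pow_mul, harith, hz1]
  · rw [← pow_mul, hd, mul_comm]
  · rw [← pow_succ, Nat.sub_add_cancel (by omega)]

lemma A_card_eq (q s d : ℕ) (hq2 : 2 ≤ q) (hcard : Fintype.card F = q ^ 2)
    (hfrob : ∀ x y : F, (x + y) ^ q = x ^ q + y ^ q)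
    (hadd : ∀ x : F, x + x = 0) (h2 : (2 : F) = 0)
    (hd : d = s * (q - 1)) (hd0 : d ≠ 0) (α γ : F)
    (hα1 : α ≠ 1) (hγ1 : γ ≠ 1) (hα0 : α ≠ 0) (hγ0 : γ ≠ 0) :
    (univ.filter fun x : F => x ^ d = α ∧ (x + 1) ^ d = γ).card
      = (univ.filter fun vw : F × F =>
          (vw.1 ^ (q+1) = 1 ∧ vw.1 ^ s = α) ∧ (vw.2 ^ (q+1) = 1 ∧ vw.2 ^ s = γ)
            ∧ vw.1 ≠ vw.2).card := by
  have hadd_ne : ∀ a b : F, a ≠ b → a + b ≠ 0 := by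
    intro a b hab h
    exact hab (by linear_combination h - hadd b)
  -- forward: for x in A, x^(q-1) ≠ (x+1)^(q-1)
  have hfwd : ∀ x : F, x ^ d = α → (x+1) ^ d = γ → x ≠ 0 ∧ x + 1 ≠ 0 ∧ x ^ (q-1) ≠ (x+1) ^ (q-1) := by
    intro x hxa hxg
    have hx0 : x ≠ 0 := by
      intro h; rw [h, zero_pow hd0] at hxa; exact hα0 hxa.symm
    have hx10 : x + 1 ≠ 0 := by
      intro h; rw [h, zero_pow hd0] at hxg; exact hγ0 hxg.symm
    refine ⟨hx0, hx10, ?_⟩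
    obtain ⟨hv1, hvs, hvx⟩ := pow_d_facts q s d hq2 hcard hd x hx0
    obtain ⟨hw1, hws, hwx⟩ := pow_d_facts q s d hq2 hcard hd (x+1) hx10
    intro heq
    have hxq : (x+1) ^ q = x ^ q + 1 := by rw [hfrob, one_pow]
    have h1 : x ^ (q-1) * (x + 1) = x ^ q + 1 := by rw [heq, hwx, hxq]
    have hv1' : x ^ (q-1) = 1 := by linear_combination h1 - hvx
    apply hα1
    rw [← hxa, ← hvs, hv1', one_pow]
  -- backward: key computations for x = (1+w)/(v+w)
  have hback : ∀ v w : F, v ^ (q+1) = 1 → v ^ s = α → w ^ (q+1) = 1 → w ^ s = γ → v ≠ w →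
      ((1+w)/(v+w)) ≠ 0 ∧ ((1+w)/(v+w) + 1) ≠ 0 ∧
      ((1+w)/(v+w)) ^ (q-1) = v ∧ ((1+w)/(v+w) + 1) ^ (q-1) = w := by
    intro v w hv1 hvs hw1 hws hvw'
    have hv0 : v ≠ 0 := by
      intro h; rw [h, zero_pow (by omega : q + 1 ≠ 0)] at hv1; exact zero_ne_one hv1
    have hw0 : w ≠ 0 := by
      intro h; rw [h, zero_pow (by omega : q + 1 ≠ 0)] at hw1; exact zero_ne_one hw1
    have hwne1 : w ≠ 1 := by
      intro h; rw [h, one_pow] at hws; exact hγ1 hws.symm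
    have hvne1 : v ≠ 1 := by
      intro h; rw [h, one_pow] at hvs; exact hα1 hvs.symm
    have hA : v + w ≠ 0 := hadd_ne _ _ hvw'
    have hB : (1 : F) + w ≠ 0 := hadd_ne _ _ (fun h => hwne1 h.symm)
    have hC : (1 : F) + v ≠ 0 := hadd_ne _ _ (fun h => hvne1 h.symm)
    set x := (1 + w) / (v + w) with hxdef
    have hx0 : x ≠ 0 := div_ne_zero hB hA
    have hxA : x * (v + w) = 1 + w := div_mul_cancel₀ _ hA
    have hx1A : (x + 1) * (v + w) = 1 + v := by linear_combination hxA + hadd w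
    have hx10 : x + 1 ≠ 0 := by
      intro h; rw [h, zero_mul] at hx1A; exact hC hx1A.symm
    have hvq : v ^ q * v = 1 := by rw [← pow_succ]; exact hv1
    have hwq : w ^ q * w = 1 := by rw [← pow_succ]; exact hw1
    have hAq0 : (v + w) ^ q * (v + w) ≠ 0 := mul_ne_zero (pow_ne_zero _ hA) hA
    have hAq : (v+w) ^ q = v ^ q + w ^ q := hfrob v w
    have hkey : x ^ q = v * x := by
      apply mul_right_cancel₀ hAq0
      have hxq' : x ^ q * (v+w) ^ q = 1 + w ^ q := by
        rw [← mul_pow, hxA, hfrob, one_pow]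
      calc x ^ q * ((v+w) ^ q * (v+w)) = (x ^ q * (v+w) ^ q) * (v+w) := by ring
        _ = (1 + w ^ q) * (v+w) := by rw [hxq']
        _ = v * x * ((v+w) ^ q * (v+w)) := ?_
      have e : v * x * ((v+w) ^ q * (v+w)) = v * (x * (v+w)) * (v+w) ^ q := by ring
      rw [e, hxA, hAq]
      linear_combination (-(1+w))*hvq + (1-v)*hwq
    have hkey2 : (x+1) ^ q = w * (x+1) := by
      apply mul_right_cancel₀ hAq0
      have hx1q' : (x+1) ^ q * (v+w) ^ q = 1 + v ^ q := by
        rw [← mul_pow, hx1A, hfrob, one_pow]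
      calc (x+1) ^ q * ((v+w) ^ q * (v+w)) = ((x+1) ^ q * (v+w) ^ q) * (v+w) := by ring
        _ = (1 + v ^ q) * (v+w) := by rw [hx1q']
        _ = w * (x+1) * ((v+w) ^ q * (v+w)) := ?_
      have e : w * (x+1) * ((v+w) ^ q * (v+w)) = w * ((x+1) * (v+w)) * (v+w) ^ q := by ring
      rw [e, hx1A, hAq]
      linear_combination (1-w)*hvq + (-(1+v))*hwq
    obtain ⟨-, -, hvx⟩ := pow_d_facts q s d hq2 hcard hd x hx0
    obtain ⟨-, -, hwx⟩ := pow_d_facts q s d hq2 hcard hd (x+1) hx10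
    refine ⟨hx0, hx10, ?_, ?_⟩
    · apply mul_right_cancel₀ hx0
      rw [hvx, hkey]
    · apply mul_right_cancel₀ hx10
      rw [hwx, hkey2]
  apply Finset.card_nbij' (i := fun x => (x ^ (q-1), (x+1) ^ (q-1)))
    (j := fun vw => (1 + vw.2) / (vw.1 + vw.2))
  · intro x hx
    simp only [Finset.mem_coe, mem_filter, mem_univ, true_and] at hx ⊢
    obtain ⟨hxa, hxg⟩ := hx
    obtain ⟨hx0, hx10, hne⟩ := hfwd x hxa hxg
    obtain ⟨hv1, hvs, hvx⟩ := pow_d_facts q s d hq2 hcard hd x hx0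
    obtain ⟨hw1, hws, hwx⟩ := pow_d_facts q s d hq2 hcard hd (x+1) hx10
    exact ⟨⟨hv1, by rw [hvs, hxa]⟩, ⟨hw1, by rw [hws, hxg]⟩, hne⟩
  · intro vw hvw
    simp only [Finset.mem_coe, mem_filter, mem_univ, true_and] at hvw ⊢
    obtain ⟨⟨hv1, hvs⟩, ⟨hw1, hws⟩, hvw'⟩ := hvw
    obtain ⟨hx0, hx10, hxv, hxw⟩ := hback vw.1 vw.2 hv1 hvs hw1 hws hvw'
    obtain ⟨-, hvs', -⟩ := pow_d_facts q s d hq2 hcard hd _ hx0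
    obtain ⟨-, hws', -⟩ := pow_d_facts q s d hq2 hcard hd _ hx10
    constructor
    · rw [← hvs', hxv, hvs]
    · rw [← hws', hxw, hws]
  · intro x hx
    simp only [Finset.mem_coe, mem_filter, mem_univ, true_and] at hx
    obtain ⟨hxa, hxg⟩ := hx
    obtain ⟨hx0, hx10, hne⟩ := hfwd x hxa hxg
    obtain ⟨hv1, hvs, hvx⟩ := pow_d_facts q s d hq2 hcard hd x hx0
    obtain ⟨hw1, hws, hwx⟩ := pow_d_facts q s d hq2 hcard hd (x+1) hx10
    have hxq : (x+1) ^ q = x ^ q + 1 := by rw [hfrob, one_pow]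
    have hwx' : (x+1) ^ (q-1) * (x+1) = x ^ q + 1 := by rw [hwx, hxq]
    have hA : x ^ (q-1) + (x+1) ^ (q-1) ≠ 0 := hadd_ne _ _ hne
    show (1 + (x+1) ^ (q-1)) / (x ^ (q-1) + (x+1) ^ (q-1)) = x
    rw [div_eq_iff hA]
    linear_combination (-1) * hvx - hwx' + ((x+1) ^ (q-1) - x ^ q) * h2
  · intro vw hvw
    simp only [Finset.mem_coe, mem_filter, mem_univ, true_and] at hvw
    obtain ⟨⟨hv1, hvs⟩, ⟨hw1, hws⟩, hvw'⟩ := hvw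
    obtain ⟨hx0, hx10, hxv, hxw⟩ := hback vw.1 vw.2 hv1 hvs hw1 hws hvw'
    exact Prod.ext hxv hxw

lemma fiber_count (q s t : ℕ) (hq2 : 2 ≤ q) (hcard : Fintype.card F = q ^ 2)
    (htg : Nat.gcd s (q + 1) = t) (hs0 : 0 < s)
    (α : F) (hα : α ^ ((q + 1) / t) = 1) :
    (univ.filter fun v : F => v ^ (q + 1) = 1 ∧ v ^ s = α).card = t := by
  have ht0 : 0 < t := htg ▸ Nat.gcd_pos_of_pos_left _ hs0
  have hts : t ∣ s := by rw [← htg]; exact Nat.gcd_dvd_left _ _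
  have htq : t ∣ q + 1 := by rw [← htg]; exact Nat.gcd_dvd_right _ _
  have hq1sq : (q + 1) ∣ Fintype.card F - 1 := by
    rw [hcard]
    exact ⟨q - 1, by rw [← Nat.sq_sub_sq q 1, one_pow]⟩
  have hkey : ∀ v : F, v ^ (q + 1) = 1 → v ^ s = 1 → v ^ t = 1 := by
    intro v h1 h2
    rw [← htg]
    exact pow_gcd_eq_one.mpr ⟨h2, h1⟩
  obtain ⟨u, hu⟩ := htq
  obtain ⟨s', hs'⟩ := hts
  set μ : Finset F := univ.filter (fun v : F => v ^ (q + 1) = 1) with hμ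
  have hμcard : μ.card = q + 1 := roots_count _ (by omega) hq1sq
  set K : Finset F := univ.filter (fun v : F => v ^ t = 1) with hK
  have hKcard : K.card = t := roots_count _ ht0 (dvd_trans ⟨u, hu⟩ hq1sq)
  have hfiber : ∀ β : F, ∀ v₀, v₀ ∈ μ → v₀ ^ s = β →
      (μ.filter fun v => v ^ s = β).card = t := by
    intro β v₀ hv₀μ hv₀s
    have hv₀1 : v₀ ^ (q + 1) = 1 := by simpa [hμ] using hv₀μ
    have hv₀0 : v₀ ≠ 0 := by
      intro h; rw [h, zero_pow (by omega : q + 1 ≠ 0)] at hv₀1; exact zero_ne_one hv₀1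
    have hβ0 : β ≠ 0 := by rw [← hv₀s]; exact pow_ne_zero _ hv₀0
    rw [← hKcard]
    apply Finset.card_bij' (i := fun v _ => v₀⁻¹ * v) (j := fun k _ => v₀ * k)
    · intro v hv
      simp only [hμ, mem_filter, mem_univ, true_and] at hv
      obtain ⟨hv1, hvs⟩ := hv
      simp only [hK, mem_filter, mem_univ, true_and]
      apply hkey
      · rw [mul_pow, inv_pow, hv1, hv₀1, inv_one, one_mul]
      · rw [mul_pow, inv_pow, hvs, hv₀s, inv_mul_cancel₀ hβ0]
    · intro k hkK
      simp only [hK, mem_filter, mem_univ, true_and] at hkK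
      simp only [hμ, mem_filter, mem_univ, true_and]
      constructor
      · rw [mul_pow, hv₀1, one_mul, hu, pow_mul, hkK, one_pow]
      · rw [mul_pow, hv₀s, hs', pow_mul, hkK, one_pow, mul_one]
    · intro v _; field_simp
    · intro k _; field_simp
  have himgsub : μ.image (fun v => v ^ s) ⊆ univ.filter (fun β : F => β ^ ((q+1)/t) = 1) := by
    intro β hβ
    obtain ⟨v, hvμ, rfl⟩ := Finset.mem_image.mp hβ
    simp only [hμ, mem_filter, mem_univ, true_and] at hvμ
    simp only [mem_filter, mem_univ, true_and]
    have hdiv : (q + 1) / t = u := by rw [hu]; exact Nat.mul_div_cancel_left u ht0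
    have harith : s * ((q+1)/t) = (q+1) * s' := by rw [hdiv, hs', hu]; ring
    rw [← pow_mul, harith, pow_mul, hvμ, one_pow]
  have hu0 : 0 < u := by
    rcases Nat.eq_zero_or_pos u with h | h
    · rw [h, mul_zero] at hu; omega
    · exact h
  have hdiv : (q + 1) / t = u := by rw [hu]; exact Nat.mul_div_cancel_left u ht0
  have hWcard : (univ.filter (fun β : F => β ^ ((q+1)/t) = 1)).card = (q+1)/t := by
    apply roots_count
    · rw [hdiv]; exact hu0
    · exact dvd_trans (Nat.div_dvd_of_dvd ⟨u, hu⟩) hq1sq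
  have himgcard : (μ.image (fun v => v ^ s)).card * t = q + 1 := by
    rw [← hμcard, Finset.card_eq_sum_card_image (fun v => v ^ s) μ]
    rw [Finset.sum_congr rfl (fun β hβ => ?_), Finset.sum_const, smul_eq_mul]
    obtain ⟨v₀, hv₀μ, hv₀s⟩ := Finset.mem_image.mp hβ
    exact hfiber β v₀ hv₀μ hv₀s
  have himg : (μ.image (fun v => v ^ s)).card = (q+1)/t := by
    rw [← himgcard, Nat.mul_div_cancel _ ht0]
  have himgeq : μ.image (fun v => v ^ s) = univ.filter (fun β : F => β ^ ((q+1)/t) = 1) :=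
    Finset.eq_of_subset_of_card_le himgsub (by rw [hWcard, himg])
  have hαmem : α ∈ μ.image (fun v => v ^ s) := by
    rw [himgeq]; simp only [mem_filter, mem_univ, true_and]; exact hα
  obtain ⟨v₀, hv₀μ, hv₀s⟩ := Finset.mem_image.mp hαmem
  have hres := hfiber α v₀ hv₀μ hv₀s
  rw [hμ, Finset.filter_filter] at hres
  exact hres

lemma B_card (q s t : ℕ) (hq2 : 2 ≤ q) (hcard : Fintype.card F = q ^ 2)
    (htg : Nat.gcd s (q + 1) = t) (hs0 : 0 < s)
    (α γ : F) (hα : α ^ ((q + 1) / t) = 1) (hγ : γ ^ ((q + 1) / t) = 1) :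
    (univ.filter fun vw : F × F =>
        (vw.1 ^ (q+1) = 1 ∧ vw.1 ^ s = α) ∧ (vw.2 ^ (q+1) = 1 ∧ vw.2 ^ s = γ)
          ∧ vw.1 ≠ vw.2).card = if α = γ then t * t - t else t * t := by
  have hVα : (univ.filter fun v : F => v ^ (q+1) = 1 ∧ v ^ s = α).card = t :=
    fiber_count q s t hq2 hcard htg hs0 α hα
  have hVγ : (univ.filter fun v : F => v ^ (q+1) = 1 ∧ v ^ s = γ).card = t :=
    fiber_count q s t hq2 hcard htg hs0 γ hγ
  set X : Finset (F × F) := univ.filter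
      (fun vw : F × F => (vw.1 ^ (q+1) = 1 ∧ vw.1 ^ s = α) ∧ (vw.2 ^ (q+1) = 1 ∧ vw.2 ^ s = γ)) with hX
  have hXprod : X = (univ.filter fun v : F => v ^ (q+1) = 1 ∧ v ^ s = α) ×ˢ
      (univ.filter fun v : F => v ^ (q+1) = 1 ∧ v ^ s = γ) := by
    ext vw
    simp only [hX, mem_filter, mem_univ, true_and, mem_product]
  have hXcard : X.card = t * t := by rw [hXprod, Finset.card_product, hVα, hVγ]
  have hBX : (univ.filter fun vw : F × F =>
      (vw.1 ^ (q+1) = 1 ∧ vw.1 ^ s = α) ∧ (vw.2 ^ (q+1) = 1 ∧ vw.2 ^ s = γ)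
        ∧ vw.1 ≠ vw.2) = X.filter (fun vw => vw.1 ≠ vw.2) := by
    rw [hX, Finset.filter_filter]
    apply Finset.filter_congr
    intro vw _
    tauto
  rw [hBX]
  by_cases hαγ : α = γ
  · subst hαγ
    rw [if_pos rfl]
    rw [Finset.filter_not, Finset.card_sdiff_of_subset (Finset.filter_subset _ _), hXcard]
    congr 1
    rw [← hVα]
    apply Finset.card_nbij' (i := fun vw => vw.1) (j := fun v => (v, v))
    · intro vw hvw
      simp only [Finset.mem_coe, hX, mem_filter, mem_univ, true_and, not_not] at hvw
      exact mem_filter.mpr ⟨mem_univ _, hvw.1.1⟩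
    · intro v hv
      have hv' := (mem_filter.mp hv).2
      simp only [Finset.mem_coe, hX, mem_filter, mem_univ, true_and, not_not]
      exact ⟨⟨hv', hv'⟩, trivial⟩
    · intro vw hvw
      simp only [Finset.mem_coe, hX, mem_filter, mem_univ, true_and, not_not] at hvw
      exact Prod.ext rfl hvw.2
    · intro v _; rfl
  · rw [if_neg hαγ, ← hXcard]
    congr 1
    apply Finset.filter_true_of_mem
    intro vw hvw
    simp only [hX, mem_filter, mem_univ, true_and] at hvw
    obtain ⟨⟨-, h2⟩, -, h4⟩ := hvw
    intro heq
    exact hαγ (by rw [← h2, heq, h4])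

lemma quad (q : ℕ) (hfrob : ∀ x y : F, (x + y) ^ q = x ^ q + y ^ q)
    (h2F : (2 : F) = 0) (a b : F)
    (ha : a ^ (q+1) = 1) (hb : b ^ (q+1) = 1) (hs : a + b = 1) :
    a ^ 2 + a + 1 = 0 ∧ b = a + 1 := by
  have hb' : b = a + 1 := by linear_combination hs - a * h2F
  have ha' : a ^ q * a = 1 := by rw [← pow_succ]; exact ha
  have hbq : b ^ q * b = 1 := by rw [← pow_succ]; exact hb
  have hq1 : a ^ q + b ^ q = 1 := by rw [← hfrob, hs, one_pow]
  have hab : a * b = b + a := by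
    have e1 : (a ^ q + b ^ q) * (a * b) = (a ^ q * a) * b + (b ^ q * b) * a := by ring
    rw [ha', hbq, hq1, one_mul, one_mul, one_mul] at e1
    exact e1
  exact ⟨by linear_combination hab - (a - 1) * hb' + (a + 1) * h2F, hb'⟩

theorem stmt_15 (m n s t d : ℕ) (hm : 0 < m) (hn : n = 2 * m) (hs : 0 < s)
    (ht : t = Nat.gcd s (2 ^ m + 1)) (hbig : (2 ^ m + 1) / t > 3)
    (h3t : 3 * t ∣ 2 ^ m + 1)
    (hd : d = s * (2 ^ m - 1))
    (F : Type) [Field F] [Fintype F] [DecidableEq F] (hF : Fintype.card F = 2 ^ n) :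
    (Finset.univ.filter fun xy : F × F =>
      xy.1 ^ d + xy.2 ^ d = 1 ∧ (xy.1 + 1) ^ d + (xy.2 + 1) ^ d = 1).card =
      4 * t ^ 4 - 4 * t ^ 3 + 2 * t ^ 2 + 2 := by
  classical
  set q : ℕ := 2 ^ m with hqdef
  have hq2 : 2 ≤ q := by
    calc 2 = 2 ^ 1 := rfl
    _ ≤ 2 ^ m := Nat.pow_le_pow_right (by norm_num) hm
  have hcard : Fintype.card F = q ^ 2 := by
    rw [hF, hn, hqdef, ← pow_mul, mul_comm]
  have hd0 : d ≠ 0 := by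
    rw [hd]; exact Nat.mul_ne_zero (by omega) (by omega)
  have ht0 : 0 < t := by rw [ht]; exact Nat.gcd_pos_of_pos_left _ hs
  have htg : Nat.gcd s (q + 1) = t := ht.symm
  -- characteristic 2
  have hchar2 : CharP F 2 := by
    obtain ⟨p, hp⟩ := CharP.exists F
    haveI := hp
    have hpp : Nat.Prime p := CharP.char_is_prime F p
    obtain ⟨k, -, hk⟩ := FiniteField.card F p
    have hpdvd : p ∣ 2 ^ n := by
      rw [← hF, hk]
      exact dvd_pow_self p (by exact_mod_cast k.ne_zero)
    have h2' : p ∣ 2 := hpp.dvd_of_dvd_pow hpdvd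
    have : p = 2 := (Nat.prime_dvd_prime_iff_eq hpp Nat.prime_two).mp h2'
    rwa [this] at hp
  haveI := hchar2
  haveI : ExpChar F 2 := ExpChar.prime Nat.prime_two
  have h2F : (2 : F) = 0 := by
    have := CharP.cast_eq_zero F 2
    exact_mod_cast this
  have hadd : ∀ x : F, x + x = 0 := fun x => by rw [← two_mul, h2F, zero_mul]
  have hfrob : ∀ x y : F, (x + y) ^ q = x ^ q + y ^ q := by
    intro x y
    rw [hqdef]
    exact add_pow_expChar_pow x y 2 m
  have h11 : (1:F) + 1 = 0 := hadd 1
  -- roots of unity setup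
  have hq13 : 3 ∣ q + 1 := dvd_trans (dvd_mul_right 3 t) h3t
  have hq1card : q + 1 ∣ Fintype.card F - 1 := by
    rw [hcard]; exact ⟨q - 1, by rw [← Nat.sq_sub_sq q 1, one_pow]⟩
  have h3card : 3 ∣ Fintype.card F - 1 := dvd_trans hq13 hq1card
  have hroots3 : (univ.filter fun v : F => v ^ 3 = 1).card = 3 :=
    roots_count 3 (by norm_num) h3card
  obtain ⟨ω, hωmem, hω1⟩ := Finset.exists_mem_ne (by rw [hroots3]; norm_num) (1 : F)
  have hω3 : ω ^ 3 = 1 := (mem_filter.mp hωmem).2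
  have hω : ω^2 + ω + 1 = 0 := by
    have hfac : (ω - 1) * (ω^2 + ω + 1) = 0 := by linear_combination hω3
    rcases mul_eq_zero.mp hfac with h | h
    · exact absurd (sub_eq_zero.mp h) hω1
    · exact h
  have hω0 : ω ≠ 0 := by intro h; rw [h] at hω; simp at hω
  have hωp0 : ω + 1 ≠ 0 := by intro h; exact hω1 (by linear_combination h - h2F)
  have hωp1 : ω + 1 ≠ 1 := by intro h; exact hω0 (by linear_combination h)
  have hωne : ω ≠ ω + 1 := by
    intro h; exact one_ne_zero (α := F) (by linear_combination -h)
  have hω2 : ω^2 = ω + 1 := by linear_combination hω - (1+ω) * h2F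
  have hωp3 : (ω+1)^3 = 1 := by
    rw [← hω2, ← pow_mul, show 2*3 = 3*2 from rfl, pow_mul, hω3, one_pow]
  have hωpp : ω + 1 + 1 = ω := by rw [add_assoc, h11, add_zero]
  have hpow : ∀ α : F, α ^ 3 = 1 → α ^ ((q+1)/t) = 1 := by
    obtain ⟨u, hu⟩ := h3t
    intro α hα
    have hdiv : (q+1)/t = 3 * u := by
      rw [hu, show 3 * t * u = t * (3 * u) by ring]
      exact Nat.mul_div_cancel_left _ ht0
    rw [hdiv, pow_mul, hα, one_pow]
  have cA : ∀ α γ : F, α ^ 3 = 1 → γ ^ 3 = 1 → α ≠ 0 → α ≠ 1 → γ ≠ 0 → γ ≠ 1 →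
      (univ.filter fun x : F => x ^ d = α ∧ (x + 1) ^ d = γ).card
        = if α = γ then t*t - t else t*t := by
    intro α γ h1 h2 h3 h4 h5 h6
    rw [A_card_eq q s d hq2 hcard hfrob hadd h2F hd hd0 α γ h4 h6 h3 h5]
    exact B_card q s t hq2 hcard htg hs α γ (hpow α h1) (hpow γ h2)
  have hdpow : ∀ z : F, z ≠ 0 → (z ^ d) ^ (q+1) = 1 := by
    intro z hz
    obtain ⟨hA, hB, -⟩ := pow_d_facts q s d hq2 hcard hd z hz
    rw [← hB, ← pow_mul, mul_comm, pow_mul, hA, one_pow]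
  have hroot : ∀ a : F, a^2 + a + 1 = 0 → a = ω ∨ a = ω + 1 := by
    intro a ha2
    have hfac : (a - ω) * (a - (ω+1)) = 0 := by
      linear_combination ha2 + hω + (-(a*ω) - a - 1) * h2F
    rcases mul_eq_zero.mp hfac with h | h
    · left; exact sub_eq_zero.mp h
    · right; exact sub_eq_zero.mp h
  have hplus1 : ∀ z : F, z + 1 = 0 → z = 1 := fun z h => by linear_combination h - h2F
  -- the six-way characterization
  have hiff : ∀ xy : F × F,
      (xy.1 ^ d + xy.2 ^ d = 1 ∧ (xy.1 + 1) ^ d + (xy.2 + 1) ^ d = 1) ↔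
      (xy = ((0:F),(1:F)) ∨ (xy = ((1:F),(0:F)) ∨
        (((xy.1^d = ω ∧ (xy.1+1)^d = ω) ∧ (xy.2^d = ω+1 ∧ (xy.2+1)^d = ω+1)) ∨
        (((xy.1^d = ω ∧ (xy.1+1)^d = ω+1) ∧ (xy.2^d = ω+1 ∧ (xy.2+1)^d = ω)) ∨
        (((xy.1^d = ω+1 ∧ (xy.1+1)^d = ω) ∧ (xy.2^d = ω ∧ (xy.2+1)^d = ω+1)) ∨
        ((xy.1^d = ω+1 ∧ (xy.1+1)^d = ω+1) ∧ (xy.2^d = ω ∧ (xy.2+1)^d = ω))))))) := by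
    rintro ⟨x, y⟩
    simp only [Prod.mk.injEq]
    constructor
    · rintro ⟨e1, e2⟩
      by_cases hx0 : x = 0
      · left
        refine ⟨hx0, ?_⟩
        rw [hx0, zero_pow hd0, zero_add] at e1
        rw [hx0, zero_add, one_pow] at e2
        have hz : (y+1)^d = 0 := by linear_combination e2
        exact hplus1 y (pow_eq_zero_iff hd0 |>.mp hz)
      by_cases hx1 : x = 1
      · right; left
        refine ⟨hx1, ?_⟩
        rw [hx1, one_pow] at e1
        have hz : y^d = 0 := by linear_combination e1
        exact pow_eq_zero_iff hd0 |>.mp hz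
      -- nondegenerate case
      have hy0 : y ≠ 0 := by
        intro h
        rw [h, zero_pow hd0, add_zero] at e1
        rw [h, zero_add, one_pow] at e2
        have hz : (x+1)^d = 0 := by linear_combination e2
        exact hx1 (hplus1 x (pow_eq_zero_iff hd0 |>.mp hz))
      have hy1 : y ≠ 1 := by
        intro h
        rw [h, one_pow] at e1
        have hz : x^d = 0 := by linear_combination e1
        exact hx0 (pow_eq_zero_iff hd0 |>.mp hz)
      have hx10 : x + 1 ≠ 0 := fun h => hx1 (hplus1 x h)
      have hy10 : y + 1 ≠ 0 := fun h => hy1 (hplus1 y h)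
      obtain ⟨hA2, hB2⟩ := quad q hfrob h2F (x^d) (y^d) (hdpow x hx0) (hdpow y hy0) e1
      obtain ⟨hC2, hE2⟩ := quad q hfrob h2F ((x+1)^d) ((y+1)^d)
        (hdpow (x+1) hx10) (hdpow (y+1) hy10) e2
      rcases hroot _ hA2 with ha | ha <;> rcases hroot _ hC2 with hc | hc
      · right; right; left
        exact ⟨⟨ha, hc⟩, by rw [hB2, ha], by rw [hE2, hc]⟩
      · right; right; right; left
        exact ⟨⟨ha, hc⟩, by rw [hB2, ha], by rw [hE2, hc, hωpp]⟩
      · right; right; right; right; left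
        exact ⟨⟨ha, hc⟩, by rw [hB2, ha, hωpp], by rw [hE2, hc]⟩
      · right; right; right; right; right
        exact ⟨⟨ha, hc⟩, by rw [hB2, ha, hωpp], by rw [hE2, hc, hωpp]⟩
    · rintro (⟨rfl, rfl⟩ | ⟨rfl, rfl⟩ | ⟨⟨ha, hc⟩, hb, he⟩ | ⟨⟨ha, hc⟩, hb, he⟩ |
        ⟨⟨ha, hc⟩, hb, he⟩ | ⟨⟨ha, hc⟩, hb, he⟩)
      · constructor
        · rw [zero_pow hd0, one_pow, zero_add]
        · rw [zero_add, one_pow, h11, zero_pow hd0, add_zero]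
      · constructor
        · rw [zero_pow hd0, one_pow, add_zero]
        · rw [zero_add, one_pow, h11, zero_pow hd0, zero_add]
      · exact ⟨by rw [ha, hb]; linear_combination ω * h2F,
          by rw [hc, he]; linear_combination ω * h2F⟩
      · exact ⟨by rw [ha, hb]; linear_combination ω * h2F,
          by rw [hc, he]; linear_combination ω * h2F⟩
      · exact ⟨by rw [ha, hb]; linear_combination ω * h2F,
          by rw [hc, he]; linear_combination ω * h2F⟩
      · exact ⟨by rw [ha, hb]; linear_combination ω * h2F,
          by rw [hc, he]; linear_combination ω * h2F⟩
  -- define the six pieces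
  set D1 : Finset (F × F) := univ.filter (fun xy : F × F => xy = ((0:F),(1:F))) with hD1
  set D2 : Finset (F × F) := univ.filter (fun xy : F × F => xy = ((1:F),(0:F))) with hD2
  set R1 : Finset (F × F) := univ.filter (fun xy : F × F =>
    (xy.1^d = ω ∧ (xy.1+1)^d = ω) ∧ (xy.2^d = ω+1 ∧ (xy.2+1)^d = ω+1)) with hR1
  set R2 : Finset (F × F) := univ.filter (fun xy : F × F =>
    (xy.1^d = ω ∧ (xy.1+1)^d = ω+1) ∧ (xy.2^d = ω+1 ∧ (xy.2+1)^d = ω)) with hR2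
  set R3 : Finset (F × F) := univ.filter (fun xy : F × F =>
    (xy.1^d = ω+1 ∧ (xy.1+1)^d = ω) ∧ (xy.2^d = ω ∧ (xy.2+1)^d = ω+1)) with hR3
  set R4 : Finset (F × F) := univ.filter (fun xy : F × F =>
    (xy.1^d = ω+1 ∧ (xy.1+1)^d = ω+1) ∧ (xy.2^d = ω ∧ (xy.2+1)^d = ω)) with hR4
  have hSeq : (Finset.univ.filter fun xy : F × F =>
      xy.1 ^ d + xy.2 ^ d = 1 ∧ (xy.1 + 1) ^ d + (xy.2 + 1) ^ d = 1)
      = D1 ∪ (D2 ∪ (R1 ∪ (R2 ∪ (R3 ∪ R4)))) := by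
    ext xy
    simp only [hD1, hD2, hR1, hR2, hR3, hR4, mem_union, mem_filter, mem_univ, true_and]
    exact hiff xy
  have key0 : ∀ x : F, x = 0 → ∀ α : F, α ≠ 0 → x ^ d = α → False := by
    intro x hx α hα h
    rw [hx, zero_pow hd0] at h
    exact hα h.symm
  have keyne : ∀ x : F, x ^ d = ω → x ^ d = ω + 1 → False := by
    intro x h1 h2
    exact hωne (h1.symm.trans h2)
  have dj5 : Disjoint R3 R4 := by
    rw [Finset.disjoint_left]
    rintro ⟨x, y⟩ h1 h2
    simp only [hR3, hR4, mem_filter, mem_univ, true_and] at h1 h2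
    exact keyne (x+1) h1.1.2 h2.1.2
  have dj4 : Disjoint R2 (R3 ∪ R4) := by
    rw [Finset.disjoint_left]
    rintro ⟨x, y⟩ h1 h2
    simp only [hR2, hR3, hR4, mem_union, mem_filter, mem_univ, true_and] at h1 h2
    rcases h2 with h2 | h2 <;> exact keyne x h1.1.1 h2.1.1
  have dj3 : Disjoint R1 (R2 ∪ (R3 ∪ R4)) := by
    rw [Finset.disjoint_left]
    rintro ⟨x, y⟩ h1 h2
    simp only [hR1, hR2, hR3, hR4, mem_union, mem_filter, mem_univ, true_and] at h1 h2
    rcases h2 with h2 | h2 | h2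
    · exact keyne (x+1) h1.1.2 h2.1.2
    · exact keyne x h1.1.1 h2.1.1
    · exact keyne x h1.1.1 h2.1.1
  have dj2 : Disjoint D2 (R1 ∪ (R2 ∪ (R3 ∪ R4))) := by
    rw [Finset.disjoint_left]
    rintro ⟨x, y⟩ h1 h2
    simp only [hD2, hR1, hR2, hR3, hR4, mem_union, mem_filter, mem_univ, true_and,
      Prod.mk.injEq] at h1 h2
    have hx1 : x + 1 = 0 := by rw [h1.1]; exact h11
    rcases h2 with h2 | h2 | h2 | h2
    · exact key0 (x+1) hx1 ω hω0 h2.1.2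
    · exact key0 (x+1) hx1 (ω+1) hωp0 h2.1.2
    · exact key0 (x+1) hx1 ω hω0 h2.1.2
    · exact key0 (x+1) hx1 (ω+1) hωp0 h2.1.2
  have dj1 : Disjoint D1 (D2 ∪ (R1 ∪ (R2 ∪ (R3 ∪ R4)))) := by
    rw [Finset.disjoint_left]
    rintro ⟨x, y⟩ h1 h2
    simp only [hD1, hD2, hR1, hR2, hR3, hR4, mem_union, mem_filter, mem_univ, true_and,
      Prod.mk.injEq] at h1 h2
    rcases h2 with h2 | h2 | h2 | h2 | h2
    · exact one_ne_zero (h1.2.symm.trans h2.2)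
    · exact key0 x h1.1 ω hω0 h2.1.1
    · exact key0 x h1.1 ω hω0 h2.1.1
    · exact key0 x h1.1 (ω+1) hωp0 h2.1.1
    · exact key0 x h1.1 (ω+1) hωp0 h2.1.1
  have hD1card : D1.card = 1 := by
    rw [hD1, Finset.filter_eq', if_pos (mem_univ _), Finset.card_singleton]
  have hD2card : D2.card = 1 := by
    rw [hD2, Finset.filter_eq', if_pos (mem_univ _), Finset.card_singleton]
  have hRf : ∀ α γ α' γ' : F, (univ.filter (fun xy : F × F =>
      (xy.1^d = α ∧ (xy.1+1)^d = γ) ∧ (xy.2^d = α' ∧ (xy.2+1)^d = γ'))).card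
      = (univ.filter fun z : F => z^d = α ∧ (z+1)^d = γ).card
        * (univ.filter fun z : F => z^d = α' ∧ (z+1)^d = γ').card := by
    intro α γ α' γ'
    rw [← Finset.card_product]
    congr 1
    ext xy
    simp only [mem_filter, mem_univ, true_and, mem_product]
  have hR1card : R1.card = (t*t - t) * (t*t - t) := by
    rw [hR1, hRf, cA ω ω hω3 hω3 hω0 hω1 hω0 hω1,
      cA (ω+1) (ω+1) hωp3 hωp3 hωp0 hωp1 hωp0 hωp1, if_pos rfl, if_pos rfl]
  have hR2card : R2.card = (t*t) * (t*t) := by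
    rw [hR2, hRf, cA ω (ω+1) hω3 hωp3 hω0 hω1 hωp0 hωp1,
      cA (ω+1) ω hωp3 hω3 hωp0 hωp1 hω0 hω1, if_neg hωne, if_neg (fun h => hωne h.symm)]
  have hR3card : R3.card = (t*t) * (t*t) := by
    rw [hR3, hRf, cA (ω+1) ω hωp3 hω3 hωp0 hωp1 hω0 hω1,
      cA ω (ω+1) hω3 hωp3 hω0 hω1 hωp0 hωp1, if_neg (fun h => hωne h.symm), if_neg hωne]
  have hR4card : R4.card = (t*t - t) * (t*t - t) := by
    rw [hR4, hRf, cA (ω+1) (ω+1) hωp3 hωp3 hωp0 hωp1 hωp0 hωp1,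
      cA ω ω hω3 hω3 hω0 hω1 hω0 hω1, if_pos rfl, if_pos rfl]
  rw [hSeq, Finset.card_union_of_disjoint dj1, Finset.card_union_of_disjoint dj2,
    Finset.card_union_of_disjoint dj3, Finset.card_union_of_disjoint dj4,
    Finset.card_union_of_disjoint dj5, hD1card, hD2card, hR1card, hR2card, hR3card, hR4card]
  have ht2 : t ≤ t * t := Nat.le_mul_of_pos_left t ht0
  have h34 : 4 * t^3 ≤ 4 * t^4 :=
    Nat.mul_le_mul_left 4 (Nat.pow_le_pow_right ht0 (by norm_num))
  zify [ht2, h34]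
  ring
end

section
/- Let n = 2m, d = s(2^m − 1) with gcd(s, 2^m + 1) = t and (2^m + 1)/t > 3, ψ a primitive element of F_{2^n}, α = ψ^{2^m−1}. For b ∈ F_{2^n}* with b ≠ 1 and b not of the form α^{si} + α^{sj} for any 0 ≤ i, j < (2^m+1)/t, the system x^d + y^d = b, (x+1)^d + (y+1)^d = b has no solutions in F_{2^n}^2. -/
theorem stmt_16 (m n s t d : ℕ) (hm : 0 < m) (hn : n = 2 * m) (hs : 0 < s)
    (ht : t = Nat.gcd s (2 ^ m + 1)) (hbig : (2 ^ m + 1) / t > 3)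
    (hd : d = s * (2 ^ m - 1))
    (F : Type) [Field F] [Fintype F] [DecidableEq F] (hF : Fintype.card F = 2 ^ n)
    (ψ : F) (hψ : orderOf ψ = 2 ^ n - 1)
    (α : F) (hα : α = ψ ^ (2 ^ m - 1))
    (b : F) (hb0 : b ≠ 0) (hb1 : b ≠ 1)
    (hb : ∀ i j : ℕ, i < (2 ^ m + 1) / t → j < (2 ^ m + 1) / t →
      b ≠ α ^ (s * i) + α ^ (s * j)) :
    ∀ x y : F, ¬ (x ^ d + y ^ d = b ∧ (x + 1) ^ d + (y + 1) ^ d = b) := by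
  set N := (2 ^ m + 1) / t with hN
  have h2m : 2 ≤ 2 ^ m := by
    calc 2 = 2 ^ 1 := by norm_num
    _ ≤ 2 ^ m := Nat.pow_le_pow_right (by norm_num) hm
  have hNpos : 0 < N := by omega
  have h2n : 2 ≤ 2 ^ n := by
    rw [hn]
    calc 2 = 2 ^ 1 := by norm_num
    _ ≤ 2 ^ (2 * m) := Nat.pow_le_pow_right (by norm_num) (by omega)
  have hfac : (2 : ℕ) ^ n - 1 = (2 ^ m - 1) * (2 ^ m + 1) := by
    subst hn
    obtain ⟨k, hk⟩ := Nat.exists_eq_add_of_le h2m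
    rw [two_mul, pow_add, hk, (by omega : 2 + k - 1 = 1 + k)]
    exact Nat.sub_eq_of_eq_add (by ring)
  have hdpos : 0 < d := by
    subst hd
    exact Nat.mul_pos hs (by omega)
  have hψ0 : ψ ≠ 0 := by
    intro h
    have h1 : ψ ^ orderOf ψ = 1 := pow_orderOf_eq_one ψ
    rw [hψ, h, zero_pow (by omega : (2:ℕ)^n - 1 ≠ 0)] at h1
    exact zero_ne_one h1
  set u : Fˣ := Units.mk0 ψ hψ0 with hu
  have huord : orderOf u = 2 ^ n - 1 := by
    rw [← orderOf_units]; exact hψ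
  have hgen : ∀ v : Fˣ, v ∈ Submonoid.powers u := by
    have htop : Subgroup.zpowers u = ⊤ := by
      apply Subgroup.eq_top_of_card_eq
      rw [Nat.card_zpowers, huord, Nat.card_eq_fintype_card, Fintype.card_units, hF]
    intro v
    rw [mem_powers_iff_mem_zpowers, htop]
    trivial
  have hαord : orderOf α = 2 ^ m + 1 := by
    rw [hα, orderOf_pow' _ (by omega : 2 ^ m - 1 ≠ 0), hψ, hfac, Nat.gcd_eq_right ⟨2 ^ m + 1, rfl⟩,
      Nat.mul_div_cancel_left _ (by omega : 0 < 2 ^ m - 1)]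
  have hαs : orderOf (α ^ s) = N := by
    rw [orderOf_pow' _ hs.ne', hαord, hN, ht, Nat.gcd_comm]
  have key : ∀ z : F, z ≠ 0 → ∃ i, i < N ∧ z ^ d = α ^ (s * i) := by
    intro z hz
    obtain ⟨e, he⟩ := hgen (Units.mk0 z hz)
    have hz' : z = ψ ^ e := by
      have := congrArg Units.val he
      simpa [hu] using this.symm
    refine ⟨e % N, Nat.mod_lt _ hNpos, ?_⟩
    have h1 : z ^ d = (α ^ s) ^ e := by
      rw [hz', hα, ← pow_mul, ← pow_mul, ← pow_mul]
      congr 1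
      subst hd; ring
    rw [h1, ← hαs, ← pow_mod_orderOf, hαs, ← pow_mul]
  have hone : (1 : F) = α ^ (s * 0) := by rw [mul_zero, pow_zero]
  rintro x y ⟨h1, h2⟩
  by_cases hx : x = 0
  · by_cases hy : y = 0
    · rw [hx, hy, zero_pow hdpos.ne', add_zero] at h1
      exact hb0 h1.symm
    · by_cases hy1 : y + 1 = 0
      · rw [hx, hy1, zero_add, one_pow, zero_pow hdpos.ne', add_zero] at h2
        exact hb1 h2.symm
      · obtain ⟨i, hi, hiy⟩ := key (y + 1) hy1
        refine hb 0 i hNpos hi ?_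
        rw [← hiy, ← hone, ← h2, hx, zero_add, one_pow]
  · by_cases hy : y = 0
    · by_cases hx1 : x + 1 = 0
      · rw [hy, hx1, zero_add, one_pow, zero_pow hdpos.ne', zero_add] at h2
        exact hb1 h2.symm
      · obtain ⟨i, hi, hix⟩ := key (x + 1) hx1
        refine hb i 0 hi hNpos ?_
        rw [← hix, ← hone, ← h2, hy, zero_add, one_pow]
    · obtain ⟨i, hi, hix⟩ := key x hx
      obtain ⟨j, hj, hjy⟩ := key y hy
      exact hb i j hi hj (by rw [← hix, ← hjy, ← h1])
end

section
/- Let n = 2m, d = s(3^m − 1) with gcd(s, 3^m + 1) = t and (3^m + 1)/t > 3, over F_{3^n}. If 2t does not divide 3^m + 1, then the system x^d − y^d = 1, (x+1)^d − (y+1)^d = 1 has no solutions (x,y) ∈ F_{3^n}^2; if 2t divides 3^m + 1, it has exactly t(t−1)(3^m + t^2 − 3t + 2) solutions. -/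
open Finset

lemma countRoots (F : Type) [Field F] [Fintype F] [DecidableEq F] {k : ℕ} (hk0 : 0 < k)
    (hk : k ∣ Fintype.card F - 1) :
    (Finset.univ.filter fun x : F => x ^ k = 1).card = k := by
  obtain ⟨g, hg⟩ := IsCyclic.exists_ofOrder_eq_natCard (α := Fˣ)
  have hM : orderOf g = Fintype.card F - 1 := by
    rw [hg, Nat.card_eq_fintype_card, Fintype.card_units]
  obtain ⟨c, hc⟩ := hk
  have hcard : 0 < Fintype.card F - 1 := by
    have := Fintype.one_lt_card (α := F)
    omega
  have hc0 : 0 < c := by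
    rcases Nat.eq_zero_or_pos c with rfl | h
    · simp at hc; omega
    · exact h
  have h1 : orderOf (g ^ c) = k := by
    rw [orderOf_pow, hM, hc, Nat.gcd_eq_right ⟨k, mul_comm _ _⟩, Nat.mul_div_cancel _ hc0]
  have h2 : orderOf ((g ^ c : Fˣ) : F) = k := by rw [orderOf_units, h1]
  have hprim : IsPrimitiveRoot ((g ^ c : Fˣ) : F) k := h2 ▸ IsPrimitiveRoot.orderOf _
  have hcard2 := hprim.card_nthRootsFinset
  have hset : (Finset.univ.filter fun x : F => x ^ k = 1) = Polynomial.nthRootsFinset k (1 : F) := by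
    ext x
    simp [Polynomial.mem_nthRootsFinset hk0]
  rw [hset, hcard2]

lemma bij_card (F : Type) [Field F] [Fintype F] [DecidableEq F] (q s d : ℕ)
    (hq : Fintype.card F = q ^ 2) (hq3 : 3 ≤ q) (hs : 0 < s) (hd : d = s * (q - 1))
    (frob : ∀ x y : F, (x + y) ^ q = x ^ q + y ^ q)
    (hneg : (-1 : F) ^ q = -1)
    (a b : F) (ha : a ≠ 0) (hb : b ≠ 0) :
    (Finset.univ.filter fun x : F => x ^ (q - 1) ≠ 1 ∧ x ^ d = a ∧ (x + 1) ^ d = b).card =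
      (Finset.univ.filter fun uv : F × F => uv.1 ^ (q + 1) = 1 ∧ uv.2 ^ (q + 1) = 1 ∧
        uv.1 ^ s = a ∧ uv.2 ^ s = b ∧ uv.1 ≠ uv.2 ∧ uv.1 ≠ 1 ∧ uv.2 ≠ 1).card := by
  have hq1 : 1 ≤ q - 1 := by omega
  have hqq : (q - 1) + 1 = q := by omega
  have hd0 : 0 < d := by
    rw [hd]; exact Nat.mul_pos hs (by omega)
  have hcard : Fintype.card F - 1 = (q - 1) * (q + 1) := by
    rw [hq]; cases q with
    | zero => omega
    | succ q' => simp [pow_two]; ring_nf; omega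
  -- basic facts
  have hpowq : ∀ x : F, x ≠ 0 → (x ^ (q - 1)) ^ (q + 1) = 1 := by
    intro x hx
    rw [← pow_mul, ← hcard]
    exact FiniteField.pow_card_sub_one_eq_one x hx
  have hpowd : ∀ x : F, x ^ d = (x ^ (q - 1)) ^ s := by
    intro x; rw [← pow_mul, hd, mul_comm]
  have hxq : ∀ x : F, x ^ q = x ^ (q - 1) * x := by
    intro x; rw [← pow_succ, hqq]
  -- if x ≠ 0 and (x+1)^(q-1) = 1 then x^(q-1) = 1
  have hkey : ∀ x : F, x ≠ 0 → x + 1 ≠ 0 → (x + 1) ^ (q - 1) = 1 → x ^ (q - 1) = 1 := by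
    intro x hx hx1 h
    have h2 : (x + 1) ^ q = x + 1 := by rw [hxq, h, one_mul]
    have h3 : x ^ q = x := by
      have := frob x 1
      rw [h2, one_pow] at this
      linear_combination -this
    have := hxq x
    rw [h3] at this
    have := mul_right_cancel₀ hx (by rw [← this, one_mul] : x ^ (q-1) * x = 1 * x)
    exact this
  apply Finset.card_nbij (fun x => (x ^ (q - 1), (x + 1) ^ (q - 1)))
  · -- maps to
    intro x hx
    simp only [Finset.mem_coe, mem_filter, mem_univ, true_and] at hx ⊢
    obtain ⟨h1, h2, h3⟩ := hx
    have hx0 : x ≠ 0 := by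
      intro h; rw [h, zero_pow hd0.ne'] at h2; exact ha h2.symm
    have hx10 : x + 1 ≠ 0 := by
      intro h; rw [h, zero_pow hd0.ne'] at h3; exact hb h3.symm
    have hv1 : (x + 1) ^ (q - 1) ≠ 1 := fun h => h1 (hkey x hx0 hx10 h)
    refine ⟨hpowq x hx0, hpowq _ hx10, by rw [← hpowd, h2], by rw [← hpowd, h3], ?_, h1, hv1⟩
    -- u ≠ v
    intro huv
    apply h1
    -- x^(q-1) = (x+1)^(q-1) implies x^q = x
    have e1 : x ^ q * (x + 1) = (x + 1) ^ q * x := by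
      rw [hxq, hxq (x + 1), huv]; ring
    rw [frob x 1, one_pow] at e1
    have e2 : x ^ q = x := by
      have : x ^ q * (x + 1) = (x ^ q + 1) * x := e1
      have h3' : x ^ q = x := by linear_combination this
      exact h3'
    have := hxq x
    rw [e2] at this
    exact mul_right_cancel₀ hx0 (by rw [← this, one_mul] : x ^ (q-1) * x = 1 * x)
  · -- injective
    intro x hx x' hx' hxy
    simp only [Finset.coe_filter, Set.mem_setOf_eq, mem_univ, true_and] at hx hx'
    obtain ⟨h1, h2, h3⟩ := hx
    obtain ⟨h1', h2', h3'⟩ := hx'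
    have hx0 : x ≠ 0 := by
      intro h; rw [h, zero_pow hd0.ne'] at h2; exact ha h2.symm
    have hx10 : x + 1 ≠ 0 := by
      intro h; rw [h, zero_pow hd0.ne'] at h3; exact hb h3.symm
    have hx0' : x' ≠ 0 := by
      intro h; rw [h, zero_pow hd0.ne'] at h2'; exact ha h2'.symm
    have hx10' : x' + 1 ≠ 0 := by
      intro h; rw [h, zero_pow hd0.ne'] at h3'; exact hb h3'.symm
    set u := x ^ (q - 1) with hu
    set v := (x + 1) ^ (q - 1) with hv
    have hxy' : x ^ (q-1) = x' ^ (q-1) ∧ (x+1) ^ (q-1) = (x'+1) ^ (q-1) := by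
      simpa [Prod.ext_iff] using hxy
    have hpu : x' ^ (q - 1) = u := hxy'.1.symm
    have hpv : (x' + 1) ^ (q - 1) = v := hxy'.2.symm
    -- linear relations
    have lin : ∀ z : F, z ≠ 0 → z + 1 ≠ 0 → z ^ (q-1) = u → (z+1) ^ (q-1) = v →
        (u - v) * z = v - 1 := by
      intro z hz hz1 e1 e2
      have d1 : z ^ q = u * z := by rw [hxq, e1]
      have d2 : (z + 1) ^ q = v * (z + 1) := by rw [hxq, e2]
      rw [frob z 1, one_pow, d1] at d2
      linear_combination d2
    have huv : u ≠ v := by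
      intro h
      apply h1
      have e1 : x ^ q * (x + 1) = (x + 1) ^ q * x := by
        rw [hxq, hxq (x + 1), ← hu, ← hv, h]; ring
      rw [frob x 1, one_pow] at e1
      have e2 : x ^ q = x := by linear_combination e1
      have := hxq x
      rw [e2] at this
      exact mul_right_cancel₀ hx0 (by rw [← this, one_mul] : x ^ (q-1) * x = 1 * x)
    have l1 := lin x hx0 hx10 rfl rfl
    have l2 := lin x' hx0' hx10' hpu hpv
    have : (u - v) * x = (u - v) * x' := by rw [l1, l2]
    exact mul_left_cancel₀ (sub_ne_zero_of_ne huv) this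
  · -- surjective
    intro uv huv
    simp only [Finset.coe_filter, Set.mem_setOf_eq, mem_univ, true_and] at huv
    obtain ⟨hu1, hv1, hua, hvb, huv', hu_ne1, hv_ne1⟩ := huv
    set u := uv.1 with hu
    set v := uv.2 with hv
    have hqpos : 0 < q + 1 := by omega
    have hu0 : u ≠ 0 := by
      intro h; rw [h, zero_pow hqpos.ne'] at hu1; exact zero_ne_one hu1
    have hv0 : v ≠ 0 := by
      intro h; rw [h, zero_pow hqpos.ne'] at hv1; exact zero_ne_one hv1
    have hw0 : u - v ≠ 0 := sub_ne_zero_of_ne huv'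
    have huq : u ^ q * u = 1 := by rw [← pow_succ, hu1]
    have hvq : v ^ q * v = 1 := by rw [← pow_succ, hv1]
    set x : F := (v - 1) * (u - v)⁻¹ with hxdef
    have hx0 : x ≠ 0 := mul_ne_zero (sub_ne_zero_of_ne hv_ne1) (inv_ne_zero hw0)
    have hwx : (u - v) * x = v - 1 := by
      rw [hxdef]; field_simp
    have hx1 : x + 1 = (u - 1) * (u - v)⁻¹ := by
      rw [hxdef]; field_simp; ring
    have hx10 : x + 1 ≠ 0 := by
      rw [hx1]; exact mul_ne_zero (sub_ne_zero_of_ne hu_ne1) (inv_ne_zero hw0)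
    -- compute x^q
    have hsubpow : ∀ z w : F, (z - w) ^ q = z ^ q - w ^ q := by
      intro z w
      have := frob z (-w)
      rw [sub_eq_add_neg, this, neg_eq_neg_one_mul w, mul_pow, hneg]
      ring
    have hxq_eq : x ^ q = u * x := by
      have e1 : (x * (u - v)) ^ q = (v - 1) ^ q := by
        congr 1
        rw [hxdef]; field_simp
      rw [mul_pow, hsubpow, hsubpow, one_pow] at e1
      -- e1 : x^q * (u^q - v^q) = v^q - 1
      -- u^q = u⁻¹, v^q = v⁻¹
      have huinv : u ^ q = u⁻¹ := by
        field_simp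
        linear_combination huq
      have hvinv : v ^ q = v⁻¹ := by
        field_simp
        linear_combination hvq
      rw [huinv, hvinv] at e1
      -- e1 : x^q * (u⁻¹ - v⁻¹) = v⁻¹ - 1
      have e2 : u * x * (u⁻¹ - v⁻¹) = v⁻¹ - 1 := by
        rw [hxdef]
        field_simp
        ring
      have hne : u⁻¹ - v⁻¹ ≠ 0 := by
        intro h
        apply huv'
        have : u⁻¹ = v⁻¹ := by linear_combination h
        exact inv_injective this
      exact mul_right_cancel₀ hne (e1.trans e2.symm)
    have hxu : x ^ (q - 1) = u := by
      have := hxq x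
      rw [hxq_eq] at this
      exact mul_right_cancel₀ hx0 this.symm
    have hx1q : (x + 1) ^ q = v * (x + 1) := by
      rw [frob x 1, one_pow, hxq_eq]
      linear_combination hwx
    have hxv : (x + 1) ^ (q - 1) = v := by
      have := hxq (x + 1)
      rw [hx1q] at this
      exact mul_right_cancel₀ hx10 this.symm
    refine ⟨x, ?_, ?_⟩
    · simp only [Finset.mem_coe, mem_filter, mem_univ, true_and]
      exact ⟨by rw [hxu]; exact hu_ne1, by rw [hpowd, hxu]; exact hua, by rw [hpowd, hxv]; exact hvb⟩
    · simp only [hxu, hxv]; rfl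

lemma arith_17 (t q : ℕ) (ht : 1 ≤ t) (hq : 3 ≤ q) :
    (t-1)*t*1 + t*(t-1)*1 + (t*t - t) * (((t-1)*(t-1) - (t-1)) + (q-2)) =
      t*(t-1)*(q + t^2 - 3*t + 2) := by
  rcases lt_or_ge t 2 with h | h
  · interval_cases t
    simp
  · obtain ⟨k, rfl⟩ : ∃ k, t = k + 2 := ⟨t - 2, by omega⟩
    obtain ⟨p, rfl⟩ : ∃ p, q = p + 3 := ⟨q - 3, by omega⟩
    have e0 : k + 2 - 1 = k + 1 := by omega
    have e1 : (k+2)*(k+2) - (k+2) = (k+2)*(k+1) := by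
      have h1 : (k+2)*(k+2) = (k+2)*(k+1) + (k+2) := by ring
      rw [h1, Nat.add_sub_cancel]
    have e2 : (k+1)*(k+1) - (k+1) = (k+1)*k := by
      have h1 : (k+1)*(k+1) = (k+1)*k + (k+1) := by ring
      rw [h1, Nat.add_sub_cancel]
    have e3 : (k+2)^2 = k*k + (4*k + 4) := by ring
    have e4 : p + 3 - 2 = p + 1 := by omega
    have e5 : ∀ A : ℕ, p + 3 + (A + (4*k+4)) - 3*(k+2) + 2 = p + A + k + 3 := by
      intro A; omega
    rw [e0, e1, e2, e3, e4, e5 (k*k)]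
    ring

theorem stmt_17 (m n s t d : ℕ) (hm : 0 < m) (hn : n = 2 * m) (hs : 0 < s)
    (ht : t = Nat.gcd s (3 ^ m + 1)) (hbig : (3 ^ m + 1) / t > 3)
    (hd : d = s * (3 ^ m - 1))
    (F : Type) [Field F] [Fintype F] [DecidableEq F] (hF : Fintype.card F = 3 ^ n) :
    (¬ (2 * t ∣ 3 ^ m + 1) →
      (Finset.univ.filter fun xy : F × F =>
        xy.1 ^ d - xy.2 ^ d = 1 ∧ (xy.1 + 1) ^ d - (xy.2 + 1) ^ d = 1).card = 0) ∧
    ((2 * t ∣ 3 ^ m + 1) →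
      (Finset.univ.filter fun xy : F × F =>
        xy.1 ^ d - xy.2 ^ d = 1 ∧ (xy.1 + 1) ^ d - (xy.2 + 1) ^ d = 1).card =
        t * (t - 1) * (3 ^ m + t ^ 2 - 3 * t + 2)) := by
  set q : ℕ := 3 ^ m with hqdef
  have hq3 : 3 ≤ q := by
    have : 3 ^ 1 ≤ 3 ^ m := Nat.pow_le_pow_right (by norm_num) hm
    simpa using this
  have hq2 : Fintype.card F = q ^ 2 := by
    rw [hF, hn, hqdef, ← pow_mul, mul_comm]
  -- characteristic 3
  have hchar3 : CharP F 3 := by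
    obtain ⟨p, hp⟩ := CharP.exists F
    haveI := hp
    have hprime : Nat.Prime p := CharP.char_is_prime F p
    obtain ⟨k, hpk, hcard⟩ := FiniteField.card F p
    have hdvd : p ∣ 3 ^ n := by
      rw [← hF, hcard]
      exact dvd_pow_self p (by positivity)
    have hp3 : p = 3 :=
      (Nat.prime_dvd_prime_iff_eq hprime (by norm_num)).mp (hprime.dvd_of_dvd_pow hdvd)
    rwa [← hp3]
  haveI : Fact (Nat.Prime 3) := ⟨by norm_num⟩
  haveI := hchar3
  have frob : ∀ x y : F, (x + y) ^ q = x ^ q + y ^ q := fun x y => add_pow_char_pow x y 3 m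
  have h30 : (3 : F) = 0 := by exact_mod_cast CharP.cast_eq_zero F 3
  have hneg1 : (-1 : F) ≠ 1 := by
    intro h
    apply one_ne_zero (α := F)
    linear_combination h + h30
  have h0neg1 : (0 : F) ≠ -1 := by
    intro h
    apply one_ne_zero (α := F)
    linear_combination h
  have hqodd : Odd q := Odd.pow (⟨1, by norm_num⟩ : Odd 3)
  have hnegq : (-1 : F) ^ q = -1 := hqodd.neg_one_pow
  have hq1even : Even (q - 1) := Nat.Odd.sub_odd hqodd odd_one
  have hdeven : Even d := by rw [hd]; exact hq1even.mul_left s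
  have hnegd : (-1 : F) ^ d = 1 := hdeven.neg_one_pow
  have hd0 : 0 < d := by rw [hd]; exact Nat.mul_pos hs (by omega)
  have ht_pos : 0 < t := by rw [ht]; exact Nat.gcd_pos_of_pos_left _ hs
  have hts : t ∣ s := ht ▸ Nat.gcd_dvd_left s (q + 1)
  have htq : t ∣ q + 1 := ht ▸ Nat.gcd_dvd_right s (q + 1)
  set N : ℕ := (q + 1) / t with hNdef
  have hNt : t * N = q + 1 := Nat.mul_div_cancel' htq
  have hcard1 : Fintype.card F - 1 = (q - 1) * (q + 1) := by
    rw [hq2]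
    cases q with
    | zero => omega
    | succ q' => simp [pow_two]; ring_nf; omega
  have hpow_card : ∀ x : F, x ≠ 0 → x ^ ((q - 1) * (q + 1)) = 1 := by
    intro x hx
    rw [← hcard1]
    exact FiniteField.pow_card_sub_one_eq_one x hx
  have key2 : ∀ z : F, z ≠ 0 → (z ^ d) ^ (q + 1) = 1 := by
    intro z hz
    rw [← pow_mul, hd, mul_assoc, mul_comm, pow_mul, hpow_card z hz, one_pow]
  have keyN : ∀ z : F, z ≠ 0 → (z ^ d) ^ N = 1 := by
    intro z hz
    obtain ⟨s', hs'⟩ := hts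
    have : d * N = (q - 1) * (q + 1) * s' := by
      rw [hd, hs', ← hNt]; ring
    rw [← pow_mul, this, pow_mul, hpow_card z hz, one_pow]
  have circle : ∀ c : F, c ≠ 0 → c + 1 ≠ 0 → c ^ (q + 1) = 1 → (c + 1) ^ (q + 1) = 1 →
      c = 1 := by
    intro c h0 h1 e1 e2
    have hc : (c + 1) ^ (q + 1) = ((c ^ q) + 1) * (c + 1) := by
      rw [pow_succ, frob c 1, one_pow]
    have e3 : ((c ^ q) + 1) * (c + 1) = 1 := by rw [← hc]; exact e2
    have e4 : c ^ q * c = 1 := by rw [← pow_succ]; exact e1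
    have e5 : c ^ q = -1 - c := by linear_combination e3 - e4
    have e6 : (c - 1) ^ 2 = 0 := by linear_combination (-1 : F) * e4 + c * e5 - c * h30
    have := pow_eq_zero_iff (n := 2) (by norm_num) |>.mp e6
    exact sub_eq_zero.mp this
  have htwo : (1 : F) + 1 = -1 := by linear_combination h30
  -- the X sets
  set X : F → F → Finset F :=
    fun a b => Finset.univ.filter (fun x : F => x ^ d = a ∧ (x + 1) ^ d = b) with hXdef
  have memX : ∀ a b (x : F), x ∈ X a b ↔ (x ^ d = a ∧ (x + 1) ^ d = b) := by
    intro a b x; rw [hXdef]; simp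
  -- trichotomy
  have tri : ∀ x y : F, x ^ d - y ^ d = 1 → (x + 1) ^ d - (y + 1) ^ d = 1 →
      (y = 0 ∧ x ∈ X 1 (-1)) ∨ (y = -1 ∧ x ∈ X (-1) 1) ∨
      (y ∈ X 1 1 ∧ x ∈ X (-1) (-1)) := by
    intro x y e1 e2
    by_cases hy0 : y = 0
    · left
      refine ⟨hy0, (memX _ _ _).mpr ⟨?_, ?_⟩⟩
      · rw [hy0, zero_pow hd0.ne'] at e1; linear_combination e1
      · rw [hy0, zero_add, one_pow] at e2; linear_combination e2 + h30
    by_cases hym : y = -1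
    · right; left
      refine ⟨hym, (memX _ _ _).mpr ⟨?_, ?_⟩⟩
      · rw [hym, hnegd] at e1; linear_combination e1 + h30
      · rw [hym, neg_add_cancel, zero_pow hd0.ne'] at e2; linear_combination e2
    · right; right
      have hy1 : y + 1 ≠ 0 := fun h => hym (by linear_combination h)
      have hc0 : y ^ d ≠ 0 := pow_ne_zero _ hy0
      have he0 : (y + 1) ^ d ≠ 0 := pow_ne_zero _ hy1
      have hx0 : x ≠ 0 := by
        intro h
        rw [h, zero_add, one_pow] at e2
        exact he0 (by linear_combination -e2)
      have hx1 : x + 1 ≠ 0 := by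
        intro h
        rw [h, zero_pow hd0.ne'] at e2
        -- e2 : 0 - (y+1)^d = 1, so (y+1)^d = -1; also x = -1 so x^d = 1
        have hxm : x = -1 := by linear_combination h
        rw [hxm, hnegd] at e1
        -- e1 : 1 - y^d = 1 → y^d = 0
        exact hc0 (by linear_combination -e1)
      have ha0 : x ^ d ≠ 0 := pow_ne_zero _ hx0
      have hsum1 : y ^ d + 1 = x ^ d := by linear_combination -e1
      have hyd1 : y ^ d = 1 := by
        apply circle _ hc0 (by rw [hsum1]; exact ha0) (key2 y hy0)
        rw [hsum1]; exact key2 x hx0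
      have hxd : x ^ d = -1 := by
        rw [← hsum1, hyd1]; exact htwo
      have hb0 : (x + 1) ^ d ≠ 0 := pow_ne_zero _ hx1
      have hsum2 : (y + 1) ^ d + 1 = (x + 1) ^ d := by linear_combination -e2
      have hyd2 : (y + 1) ^ d = 1 := by
        apply circle _ he0 (by rw [hsum2]; exact hb0) (key2 _ hy1)
        rw [hsum2]; exact key2 _ hx1
      have hxd2 : (x + 1) ^ d = -1 := by
        rw [← hsum2, hyd2]; exact htwo
      exact ⟨(memX _ _ _).mpr ⟨hyd1, hyd2⟩, (memX _ _ _).mpr ⟨hxd, hxd2⟩⟩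
  constructor
  · -- odd case
    intro hndvd
    have hNodd : Odd N := by
      rcases Nat.even_or_odd N with he | ho
      · obtain ⟨k, hk⟩ := he
        exact absurd ⟨k, by rw [← hNt, hk]; ring⟩ hndvd
      · exact ho
    have claimOdd : ∀ z : F, z ≠ 0 → z ^ d ≠ -1 := by
      intro z hz h
      have := keyN z hz
      rw [h, hNodd.neg_one_pow] at this
      exact hneg1 this
    rw [Finset.card_eq_zero, Finset.eq_empty_iff_forall_notMem]
    rintro ⟨x, y⟩ hmem
    simp only [mem_filter, mem_univ, true_and] at hmem
    obtain ⟨e1, e2⟩ := hmem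
    rcases tri x y e1 e2 with ⟨_, hx⟩ | ⟨_, hx⟩ | ⟨_, hx⟩
    · obtain ⟨_, h2⟩ := (memX _ _ _).mp hx
      have : x + 1 ≠ 0 := by
        intro h; rw [h, zero_pow hd0.ne'] at h2; exact h0neg1 h2
      exact claimOdd _ this h2
    · obtain ⟨h1, _⟩ := (memX _ _ _).mp hx
      have : x ≠ 0 := by
        intro h; rw [h, zero_pow hd0.ne'] at h1; exact h0neg1 h1
      exact claimOdd _ this h1
    · obtain ⟨h1, _⟩ := (memX _ _ _).mp hx
      have : x ≠ 0 := by
        intro h; rw [h, zero_pow hd0.ne'] at h1; exact h0neg1 h1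
      exact claimOdd _ this h1
  · -- even case
    intro hdvd
    set S1 : Finset F := Finset.univ.filter (fun u : F => u ^ (q+1) = 1 ∧ u ^ s = 1) with hS1def
    set Sm : Finset F := Finset.univ.filter (fun u : F => u ^ (q+1) = 1 ∧ u ^ s = -1) with hSmdef
    have hS1eq : S1 = Finset.univ.filter (fun u : F => u ^ t = 1) := by
      ext u
      simp only [hS1def, mem_filter, mem_univ, true_and]
      constructor
      · rintro ⟨h1, h2⟩
        have hdvd' : orderOf u ∣ t := by
          rw [ht]
          exact Nat.dvd_gcd (orderOf_dvd_iff_pow_eq_one.mpr h2)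
            (orderOf_dvd_iff_pow_eq_one.mpr h1)
        exact orderOf_dvd_iff_pow_eq_one.mp hdvd'
      · intro h
        obtain ⟨k, hk⟩ := htq
        obtain ⟨s', hs'⟩ := hts
        exact ⟨by rw [hk, pow_mul, h, one_pow], by rw [hs', pow_mul, h, one_pow]⟩
    have htcard : t ∣ Fintype.card F - 1 := by
      rw [hcard1]; exact htq.trans (dvd_mul_left _ _)
    have hS1card : S1.card = t := by rw [hS1eq]; exact countRoots F ht_pos htcard
    have h2tq : 2*t ∣ q + 1 := hdvd
    have h2tcard : 2*t ∣ Fintype.card F - 1 := by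
      rw [hcard1]; exact h2tq.trans (dvd_mul_left _ _)
    have hUcard : (Finset.univ.filter (fun u : F => u ^ (2*t) = 1)).card = 2*t :=
      countRoots F (by omega) h2tcard
    have hunion : Finset.univ.filter (fun u : F => u ^ (2*t) = 1) = S1 ∪ Sm := by
      ext u
      simp only [mem_filter, mem_univ, true_and, mem_union, hS1def, hSmdef]
      constructor
      · intro h
        obtain ⟨k, hk⟩ := h2tq
        have hq1 : u ^ (q+1) = 1 := by rw [hk, pow_mul, h, one_pow]
        obtain ⟨s', hs'⟩ := hts
        have h2s : u ^ s * u ^ s = 1 := by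
          rw [← pow_add]
          have he : s + s = 2*t*s' := by rw [hs']; ring
          rw [he, pow_mul, h, one_pow]
        have hfac : (u ^ s - 1) * (u ^ s + 1) = 0 := by linear_combination h2s
        rcases mul_eq_zero.mp hfac with h' | h'
        · exact Or.inl ⟨hq1, sub_eq_zero.mp h'⟩
        · exact Or.inr ⟨hq1, by linear_combination h'⟩
      · rintro (⟨h1, h2⟩ | ⟨h1, h2⟩)
        · have hdvd' : orderOf u ∣ t := by
            rw [ht]
            exact Nat.dvd_gcd (orderOf_dvd_iff_pow_eq_one.mpr h2)
              (orderOf_dvd_iff_pow_eq_one.mpr h1)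
          exact orderOf_dvd_iff_pow_eq_one.mp (hdvd'.mul_left 2)
        · have ho1 : orderOf u ∣ 2*s := by
            apply orderOf_dvd_iff_pow_eq_one.mpr
            rw [mul_comm, pow_mul, h2, neg_one_sq]
          have ho2 : orderOf u ∣ 2*(q+1) :=
            (orderOf_dvd_iff_pow_eq_one.mpr h1).mul_left 2
          have hf : orderOf u ∣ 2*t := by
            rw [ht, ← Nat.gcd_mul_left]
            exact Nat.dvd_gcd ho1 ho2
          exact orderOf_dvd_iff_pow_eq_one.mp hf
    have hdisjS : Disjoint S1 Sm := by
      rw [Finset.disjoint_left]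
      intro u h1 h2
      rw [hS1def, mem_filter] at h1
      rw [hSmdef, mem_filter] at h2
      exact hneg1 (by rw [← h2.2.2, h1.2.2])
    have hSmcard : Sm.card = t := by
      have hc := Finset.card_union_of_disjoint hdisjS
      rw [← hunion, hUcard, hS1card] at hc
      omega
    have h1S1 : (1 : F) ∈ S1 := by rw [hS1def]; simp
    have hS1e : (S1.erase 1).card = t - 1 := by
      rw [Finset.card_erase_of_mem h1S1, hS1card]
    have hone_ne : (1:F) ≠ 0 := one_ne_zero
    have hmone_ne : (-1:F) ≠ 0 := neg_ne_zero.mpr one_ne_zero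
    have hbij := fun (a b : F) (ha : a ≠ 0) (hb : b ≠ 0) =>
      bij_card F q s d hq2 hq3 hs hd frob hnegq a b ha hb
    have hT1m : (Finset.univ.filter fun uv : F × F => uv.1 ^ (q + 1) = 1 ∧
        uv.2 ^ (q + 1) = 1 ∧ uv.1 ^ s = 1 ∧ uv.2 ^ s = -1 ∧ uv.1 ≠ uv.2 ∧
        uv.1 ≠ 1 ∧ uv.2 ≠ 1) = (S1.erase 1) ×ˢ Sm := by
      ext ⟨u, v⟩
      simp only [mem_filter, mem_univ, true_and, mem_product, mem_erase, hS1def, hSmdef]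
      constructor
      · rintro ⟨h1, h2, h3, h4, h5, h6, h7⟩
        exact ⟨⟨h6, h1, h3⟩, h2, h4⟩
      · rintro ⟨⟨h6, h1, h3⟩, h2, h4⟩
        refine ⟨h1, h2, h3, h4, ?_, h6, ?_⟩
        · intro h; rw [h, h4] at h3; exact hneg1 h3
        · intro h; rw [h, one_pow] at h4; exact hneg1 h4.symm
    have hTm1 : (Finset.univ.filter fun uv : F × F => uv.1 ^ (q + 1) = 1 ∧
        uv.2 ^ (q + 1) = 1 ∧ uv.1 ^ s = -1 ∧ uv.2 ^ s = 1 ∧ uv.1 ≠ uv.2 ∧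
        uv.1 ≠ 1 ∧ uv.2 ≠ 1) = Sm ×ˢ (S1.erase 1) := by
      ext ⟨u, v⟩
      simp only [mem_filter, mem_univ, true_and, mem_product, mem_erase, hS1def, hSmdef]
      constructor
      · rintro ⟨h1, h2, h3, h4, h5, h6, h7⟩
        exact ⟨⟨h1, h3⟩, h7, h2, h4⟩
      · rintro ⟨⟨h1, h3⟩, h7, h2, h4⟩
        refine ⟨h1, h2, h3, h4, ?_, ?_, h7⟩
        · intro h; rw [← h, h3] at h4; exact hneg1 h4
        · intro h; rw [h, one_pow] at h3; exact hneg1 h3.symm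
    have hTmm : (Finset.univ.filter fun uv : F × F => uv.1 ^ (q + 1) = 1 ∧
        uv.2 ^ (q + 1) = 1 ∧ uv.1 ^ s = -1 ∧ uv.2 ^ s = -1 ∧ uv.1 ≠ uv.2 ∧
        uv.1 ≠ 1 ∧ uv.2 ≠ 1) = Sm.offDiag := by
      ext ⟨u, v⟩
      simp only [mem_filter, mem_univ, true_and, Finset.mem_offDiag, hSmdef]
      constructor
      · rintro ⟨h1, h2, h3, h4, h5, h6, h7⟩
        exact ⟨⟨h1, h3⟩, ⟨h2, h4⟩, h5⟩
      · rintro ⟨⟨h1, h3⟩, ⟨h2, h4⟩, h5⟩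
        refine ⟨h1, h2, h3, h4, h5, ?_, ?_⟩
        · intro h; rw [h, one_pow] at h3; exact hneg1 h3.symm
        · intro h; rw [h, one_pow] at h4; exact hneg1 h4.symm
    have hT11 : (Finset.univ.filter fun uv : F × F => uv.1 ^ (q + 1) = 1 ∧
        uv.2 ^ (q + 1) = 1 ∧ uv.1 ^ s = 1 ∧ uv.2 ^ s = 1 ∧ uv.1 ≠ uv.2 ∧
        uv.1 ≠ 1 ∧ uv.2 ≠ 1) = (S1.erase 1).offDiag := by
      ext ⟨u, v⟩
      simp only [mem_filter, mem_univ, true_and, Finset.mem_offDiag, mem_erase,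
        hS1def, hSmdef]
      constructor
      · rintro ⟨h1, h2, h3, h4, h5, h6, h7⟩
        exact ⟨⟨h6, h1, h3⟩, ⟨h7, h2, h4⟩, h5⟩
      · rintro ⟨⟨h6, h1, h3⟩, ⟨h7, h2, h4⟩, h5⟩
        exact ⟨h1, h2, h3, h4, h5, h6, h7⟩
    have hfq : ∀ x : F, x ^ (q-1) = 1 → x ≠ -1 → x ^ d = 1 ∧ (x+1) ^ d = 1 := by
      intro x h1 hxm
      have hx0 : x ≠ 0 := by
        intro h; rw [h, zero_pow (by omega : q-1 ≠ 0)] at h1; exact zero_ne_one h1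
      have hx10 : x + 1 ≠ 0 := fun h => hxm (by linear_combination h)
      have hqq : (q-1)+1 = q := by omega
      have hxq : x ^ q = x := by
        calc x ^ q = x ^ (q-1) * x := by rw [← pow_succ, hqq]
        _ = x := by rw [h1, one_mul]
      have h2 : (x+1) ^ (q-1) = 1 := by
        have e : (x+1)^q = x+1 := by rw [frob, one_pow, hxq]
        have e2 : (x+1)^(q-1) * (x+1) = 1 * (x+1) := by
          rw [← pow_succ, hqq, e, one_mul]
        exact mul_right_cancel₀ hx10 e2
      have pd : ∀ z : F, z ^ d = (z ^ (q-1)) ^ s :=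
        fun z => by rw [← pow_mul, hd, mul_comm]
      exact ⟨by rw [pd, h1, one_pow], by rw [pd, h2, one_pow]⟩
    have hXD : ∀ a b : F, a ≠ 0 → b ≠ 0 → ¬(a = 1 ∧ b = 1) →
        X a b = Finset.univ.filter
          (fun x : F => x ^ (q-1) ≠ 1 ∧ x ^ d = a ∧ (x+1) ^ d = b) := by
      intro a b ha hb hne
      ext x
      rw [memX]
      simp only [mem_filter, mem_univ, true_and]
      constructor
      · rintro ⟨h2, h3⟩
        refine ⟨?_, h2, h3⟩
        intro h1
        have hxm : x ≠ -1 := by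
          intro h; rw [h, neg_add_cancel, zero_pow hd0.ne'] at h3; exact hb h3.symm
        obtain ⟨e1, e2⟩ := hfq x h1 hxm
        exact hne ⟨by rw [← h2, e1], by rw [← h3, e2]⟩
      · rintro ⟨_, h2, h3⟩; exact ⟨h2, h3⟩
    have hX1m : (X 1 (-1)).card = (t-1) * t := by
      rw [hXD 1 (-1) hone_ne hmone_ne (by rintro ⟨-, h⟩; exact hneg1 h),
        hbij 1 (-1) hone_ne hmone_ne, hT1m, Finset.card_product, hS1e, hSmcard]
    have hXm1 : (X (-1) 1).card = t * (t-1) := by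
      rw [hXD (-1) 1 hmone_ne hone_ne (by rintro ⟨h, -⟩; exact hneg1 h),
        hbij (-1) 1 hmone_ne hone_ne, hTm1, Finset.card_product, hSmcard, hS1e]
    have hXmm : (X (-1) (-1)).card = t*t - t := by
      rw [hXD (-1) (-1) hmone_ne hmone_ne (by rintro ⟨h, -⟩; exact hneg1 h),
        hbij (-1) (-1) hmone_ne hmone_ne, hTmm, Finset.offDiag_card, hSmcard]
    set E : Finset F := Finset.univ.filter (fun x : F => x ^ (q-1) = 1 ∧ x ≠ -1)
      with hEdef
    have hX11eq : X 1 1 = (Finset.univ.filter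
        (fun x : F => x ^ (q-1) ≠ 1 ∧ x ^ d = 1 ∧ (x+1) ^ d = 1)) ∪ E := by
      ext x
      rw [memX]
      simp only [mem_union, mem_filter, mem_univ, true_and, hEdef]
      constructor
      · rintro ⟨h2, h3⟩
        by_cases h1 : x ^ (q-1) = 1
        · refine Or.inr ⟨h1, ?_⟩
          intro h; rw [h, neg_add_cancel, zero_pow hd0.ne'] at h3
          exact zero_ne_one h3
        · exact Or.inl ⟨h1, h2, h3⟩
      · rintro (⟨-, h2, h3⟩ | ⟨h1, hxm⟩)
        · exact ⟨h2, h3⟩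
        · exact hfq x h1 hxm
    have hdisjE : Disjoint (Finset.univ.filter
        (fun x : F => x ^ (q-1) ≠ 1 ∧ x ^ d = 1 ∧ (x+1) ^ d = 1)) E := by
      rw [Finset.disjoint_left]
      intro x h1 h2
      rw [mem_filter] at h1
      rw [hEdef, mem_filter] at h2
      exact h1.2.1 h2.2.1
    have hEcard : E.card = q - 2 := by
      have he2 : E = (Finset.univ.filter (fun x : F => x ^ (q-1) = 1)).erase (-1) := by
        ext x
        rw [hEdef, Finset.mem_erase]
        simp only [mem_filter, mem_univ, true_and]
        tauto
      have hmem : (-1 : F) ∈ Finset.univ.filter (fun x : F => x ^ (q-1) = 1) := by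
        simp only [mem_filter, mem_univ, true_and]
        exact hq1even.neg_one_pow
      have hroot : (Finset.univ.filter (fun x : F => x ^ (q-1) = 1)).card = q - 1 :=
        countRoots F (by omega) (by rw [hcard1]; exact dvd_mul_right _ _)
      rw [he2, Finset.card_erase_of_mem hmem, hroot]
      omega
    have hX11 : (X 1 1).card = ((t-1)*(t-1) - (t-1)) + (q-2) := by
      rw [hX11eq, Finset.card_union_of_disjoint hdisjE,
        hbij 1 1 hone_ne hone_ne, hT11, Finset.offDiag_card, hS1e, hEcard]
    have hSol : (Finset.univ.filter fun xy : F × F =>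
        xy.1 ^ d - xy.2 ^ d = 1 ∧ (xy.1 + 1) ^ d - (xy.2 + 1) ^ d = 1) =
        ((X 1 (-1)) ×ˢ ({0} : Finset F)) ∪ ((X (-1) 1) ×ˢ ({-1} : Finset F)) ∪
        ((X (-1) (-1)) ×ˢ (X 1 1)) := by
      ext ⟨x, y⟩
      simp only [mem_filter, mem_univ, true_and, mem_union, mem_product, mem_singleton]
      constructor
      · rintro ⟨e1, e2⟩
        rcases tri x y e1 e2 with ⟨hy, hx⟩ | ⟨hy, hx⟩ | ⟨hy, hx⟩
        · exact Or.inl (Or.inl ⟨hx, hy⟩)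
        · exact Or.inl (Or.inr ⟨hx, hy⟩)
        · exact Or.inr ⟨hx, hy⟩
      · rintro ((⟨hx, hy⟩ | ⟨hx, hy⟩) | ⟨hx, hy⟩)
        · obtain ⟨h1, h2⟩ := (memX _ _ _).mp hx
          subst hy
          constructor
          · rw [h1, zero_pow hd0.ne', sub_zero]
          · rw [h2, zero_add, one_pow]; linear_combination -h30
        · obtain ⟨h1, h2⟩ := (memX _ _ _).mp hx
          subst hy
          constructor
          · rw [h1, hnegd]; linear_combination -h30
          · rw [h2, neg_add_cancel, zero_pow hd0.ne', sub_zero]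
        · obtain ⟨h1, h2⟩ := (memX _ _ _).mp hx
          obtain ⟨h3, h4⟩ := (memX _ _ _).mp hy
          constructor
          · rw [h1, h3]; linear_combination -h30
          · rw [h2, h4]; linear_combination -h30
    rw [hSol]
    have hdu1 : Disjoint ((X 1 (-1)) ×ˢ ({0} : Finset F))
        ((X (-1) 1) ×ˢ ({-1} : Finset F)) := by
      rw [Finset.disjoint_left]
      rintro ⟨x, y⟩ h1 h2
      rw [mem_product, mem_singleton] at h1 h2
      exact h0neg1 (by rw [← h1.2, h2.2])
    have hdu2 : Disjoint (((X 1 (-1)) ×ˢ ({0} : Finset F)) ∪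
        ((X (-1) 1) ×ˢ ({-1} : Finset F))) ((X (-1) (-1)) ×ˢ (X 1 1)) := by
      rw [Finset.disjoint_left]
      rintro ⟨x, y⟩ h1 h2
      rw [mem_union] at h1
      rw [mem_product] at h2
      obtain ⟨h3, h4⟩ := (memX _ _ _).mp h2.2
      rcases h1 with h1 | h1
      · rw [mem_product, mem_singleton] at h1
        rw [h1.2, zero_pow hd0.ne'] at h3
        exact zero_ne_one h3
      · rw [mem_product, mem_singleton] at h1
        rw [h1.2, neg_add_cancel, zero_pow hd0.ne'] at h4
        exact zero_ne_one h4
    rw [Finset.card_union_of_disjoint hdu2, Finset.card_union_of_disjoint hdu1,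
      Finset.card_product, Finset.card_product, Finset.card_product,
      Finset.card_singleton, Finset.card_singleton, hX1m, hXm1, hXmm, hX11]
    exact arith_17 t q ht_pos hq3
end
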